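/- Let C(G) be the full cone over a finite graph G with cone point p, and let f be a function on C(G) with f(p) = 0. Then Γ₁ᶜ(f, Δᶜf)(p) = (1/2) Σ_{y ∈ V} f(y)Δf(y) - (1/2) Σ_{y ∈ V} f(y)² - (1/2) (Σ_{y ∈ V} f(y))². -/

import Mathlib

open Finset

variable {V : Type*}

noncomputable def lap (G : SimpleGraph V) [∀ v, Fintype (G.neighborSet v)] (f : V → ℝ) (x : V) : ℝ :=
  ∑ y ∈ G.neighborFinset x, (f y - f x)

noncomputable def gam (G : SimpleGraph V) [∀ v, Fintype (G.neighborSet v)] (f g : V → ℝ) (x : V) : ℝ :=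
  (1/2) * ∑ y ∈ G.neighborFinset x, (f y - f x) * (g y - g x)

noncomputable def gam1 (G : SimpleGraph V) [∀ v, Fintype (G.neighborSet v)] (f : V → ℝ) (x : V) : ℝ :=
  (1/2) * ∑ y ∈ G.neighborFinset x, (f y - f x)^2

noncomputable def gam2 (G : SimpleGraph V) [∀ v, Fintype (G.neighborSet v)] (f : V → ℝ) (x : V) : ℝ :=
  (1/2) * (lap G (gam1 G f) x - 2 * gam G f (lap G f) x)

def cone (G : SimpleGraph V) : SimpleGraph (Option V) where
  Adj a b := a ≠ b ∧ ∀ x ∈ a, ∀ y ∈ b, G.Adj x y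
  symm := ⟨fun _ _ h => ⟨h.1.symm, fun x hx y hy => (h.2 y hy x hx).symm⟩⟩
  loopless := ⟨fun _ h => h.1 rfl⟩

instance (G : SimpleGraph V) [DecidableEq V] [DecidableRel G.Adj] :
    DecidableRel (cone G).Adj := fun a b =>
  inferInstanceAs (Decidable (a ≠ b ∧ ∀ x ∈ a, ∀ y ∈ b, G.Adj x y))

/-! At the cone point every vertex of `G` is a neighbour, so `Γ₁ᶜ(f, Δᶜf)(p)` is half the sum of
`f(y) Δᶜf(y)` over `V`. At a vertex `y` the cone Laplacian is `Δf(y) - f(y)` (the edge to `p`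
contributes `f(p) - f(y)`), and `Δᶜf(p) = Σ f`; expanding the product gives the three terms. -/

section cone

variable (G : SimpleGraph V)

@[simp] theorem cone_adj_none_some (y : V) : (cone G).Adj none (some y) := by
  simp [cone]

@[simp] theorem cone_adj_some_none (y : V) : (cone G).Adj (some y) none := by
  simp [cone]

@[simp] theorem cone_adj_none_none : ¬(cone G).Adj none none := (cone G).loopless.irrefl none

@[simp] theorem cone_adj_some_some (x y : V) : (cone G).Adj (some x) (some y) ↔ G.Adj x y := by
  simp only [cone, ne_eq, Option.some.injEq, Option.mem_def, forall_eq']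
  exact and_iff_right_of_imp SimpleGraph.Adj.ne

variable [Fintype V] [DecidableEq V] [DecidableRel G.Adj]

theorem neighborFinset_cone_none :
    (cone G).neighborFinset none = univ.map Function.Embedding.some := by
  ext (_ | y) <;> simp

theorem neighborFinset_cone_some (y : V) :
    (cone G).neighborFinset (some y)
      = insert none ((G.neighborFinset y).map Function.Embedding.some) := by
  ext (_ | z) <;> simp

theorem lap_cone_none (f : Option V → ℝ) :
    lap (cone G) f none = ∑ y : V, (f (some y) - f none) := by
  rw [lap, neighborFinset_cone_none, sum_map]
  rfl

theorem lap_cone_some (f : Option V → ℝ) (y : V) :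
    lap (cone G) f (some y) = (f none - f (some y)) + lap G (fun z => f (some z)) y := by
  rw [lap, neighborFinset_cone_some, sum_insert (by simp), sum_map]
  rfl

theorem gam_cone_none (f g : Option V → ℝ) :
    gam (cone G) f g none = (1/2) * ∑ y : V, (f (some y) - f none) * (g (some y) - g none) := by
  rw [gam, neighborFinset_cone_none, sum_map]
  rfl

end cone

theorem stmt4 (G : SimpleGraph V) [Fintype V] [DecidableEq V] [DecidableRel G.Adj]
    (f : Option V → ℝ) (hf : f none = 0) :
    gam (cone G) f (lap (cone G) f) none
      = (1/2) * ∑ y : V, f (some y) * lap G (fun z => f (some z)) y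
        - (1/2) * ∑ y : V, (f (some y))^2
        - (1/2) * (∑ y : V, f (some y))^2 := by
  simp only [gam_cone_none, lap_cone_some, lap_cone_none, hf, sub_zero, zero_sub]
  have expand : ∀ y : V, f (some y) * (-f (some y) + lap G (fun z => f (some z)) y
      - ∑ x : V, f (some x)) = f (some y) * lap G (fun z => f (some z)) y
        - f (some y) ^ 2 - f (some y) * ∑ x : V, f (some x) := fun y => by ring
  simp only [expand, sum_sub_distrib, ← sum_mul]
  ring
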